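/- arXiv:2601.18312 — 6 statements merged into one kernel-verified Lean document; each statement's English description precedes it below -/
import Mathlib

section
/- Let p, w ∈ AP₊(ℝ,ℝ) and q : ℝ → ℝ Bohr almost periodic, with v = (1/p, q, w). Then the rotation number satisfies ρ(λ, v) ≥ 0 for every λ ∈ ℝ, and λ₁ ≤ λ₂ implies ρ(λ₁, v) ≤ ρ(λ₂, v), i.e. λ ↦ ρ(λ, v) is nonnegative and non-decreasing on ℝ. -/
open Filter Topology MeasureTheory Set

noncomputable section

/-- A continuous function `f : ℝ → E` is Bohr almost periodic if every sequence of reals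
has a subsequence along which the translates converge uniformly on `ℝ`. -/
def BohrAP {E : Type*} [NormedAddCommGroup E] (f : ℝ → E) : Prop :=
  Continuous f ∧ ∀ t : ℕ → ℝ, ∃ (s : ℕ → ℕ) (g : ℝ → E),
    StrictMono s ∧ TendstoUniformly (fun n x => f (x + t (s n))) g atTop

/-- The hull of `f`: uniform limits of sequences of translates of `f`. -/
def Hull {E : Type*} [NormedAddCommGroup E] (f : ℝ → E) : Set (ℝ → E) :=
  {g | ∃ t : ℕ → ℝ, TendstoUniformly (fun n x => f (x + t n)) g atTop}

/-- `AP₊(ℝ,ℝ)`: Bohr almost periodic functions all of whose hull elements are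
strictly positive at every point. -/
def APplus (f : ℝ → ℝ) : Prop :=
  BohrAP f ∧ ∀ g ∈ Hull f, ∀ x : ℝ, 0 < g x

/-- The set of Fourier exponents of `f`: those `l` for which the Fourier coefficient
`lim_{T→∞} (1/T) ∫₀^T f(x) e^{-i l x} dx` is nonzero (encoded as: the averages do not
tend to `0`; for Bohr almost periodic `f` the limit always exists). -/
def freqSet (f : ℝ → ℝ) : Set ℝ :=
  {l : ℝ | ¬ Tendsto
      (fun T : ℝ => (T : ℂ)⁻¹ *
        ∫ x in (0:ℝ)..T, (f x : ℂ) * Complex.exp (-(Complex.I * (l : ℂ) * (x : ℂ))))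
      atTop (𝓝 0)}

/-- The frequency module of `f`: the smallest additive subgroup of `ℝ` containing the
Fourier exponents of `f`. -/
def freqModule (f : ℝ → ℝ) : AddSubgroup ℝ := AddSubgroup.closure (freqSet f)

/-- `θ` solves the Prüfer equation `θ' = a cos²θ + (λ w - q) sin²θ`. -/
def IsPruefer (a q w : ℝ → ℝ) (lam : ℝ) (θ : ℝ → ℝ) : Prop :=
  ∀ x : ℝ, HasDerivAt θ
    (a x * Real.cos (θ x) ^ 2 + (lam * w x - q x) * Real.sin (θ x) ^ 2) x

/-- `φ` is a (real) solution of the Sturm–Liouville equation `-(pφ')' + qφ = λ w φ`: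
`φ` is `C¹`, `pφ'` is `C¹`, and the equation holds everywhere. -/
def IsSLSolution (p q w : ℝ → ℝ) (lam : ℝ) (φ : ℝ → ℝ) : Prop :=
  ContDiff ℝ 1 φ ∧ ContDiff ℝ 1 (fun x => p x * deriv φ x) ∧
    ∀ x : ℝ, -(deriv (fun y => p y * deriv φ y) x) + q x * φ x = lam * w x * φ x

/-! ### Auxiliary lemmas -/

/-- Every function belongs to its own hull (take the zero translates). -/
lemma self_mem_Hull {E : Type*} [NormedAddCommGroup E] (f : ℝ → E) : f ∈ Hull f := by
  refine ⟨fun _ => 0, ?_⟩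
  have : (fun (n : ℕ) (x : ℝ) => f (x + 0)) = fun _ x => f x := by
    funext n x; rw [add_zero]
  rw [this]
  exact fun u hu => Eventually.of_forall fun n x => refl_mem_uniformity hu

lemma abs_sin_sub_sin (y z : ℝ) : |Real.sin y - Real.sin z| ≤ |y - z| := by
  have := convex_univ.norm_image_sub_le_of_norm_hasDerivWithin_le
    (f := Real.sin) (f' := Real.cos) (C := 1)
    (fun x _ => (Real.hasDerivAt_sin x).hasDerivWithinAt)
    (fun x _ => by simpa using Real.abs_cos_le_one x) (mem_univ z) (mem_univ y)
  simpa [Real.norm_eq_abs] using this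

lemma abs_cos_sub_cos (y z : ℝ) : |Real.cos y - Real.cos z| ≤ |y - z| := by
  have := convex_univ.norm_image_sub_le_of_norm_hasDerivWithin_le
    (f := Real.cos) (f' := fun x => -Real.sin x) (C := 1)
    (fun x _ => (Real.hasDerivAt_cos x).hasDerivWithinAt)
    (fun x _ => by simpa using Real.abs_sin_le_one x) (mem_univ z) (mem_univ y)
  simpa [Real.norm_eq_abs] using this

lemma abs_sin_sq_sub (y z : ℝ) : |Real.sin y ^ 2 - Real.sin z ^ 2| ≤ 2 * |y - z| := by
  have h : Real.sin y ^ 2 - Real.sin z ^ 2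
      = (Real.sin y - Real.sin z) * (Real.sin y + Real.sin z) := by ring
  rw [h, abs_mul]
  have h1 := abs_sin_sub_sin y z
  have h2 : |Real.sin y + Real.sin z| ≤ 2 := by
    calc |Real.sin y + Real.sin z| ≤ |Real.sin y| + |Real.sin z| := abs_add_le _ _
    _ ≤ 1 + 1 := add_le_add (Real.abs_sin_le_one y) (Real.abs_sin_le_one z)
    _ = 2 := by norm_num
  calc |Real.sin y - Real.sin z| * |Real.sin y + Real.sin z|
      ≤ |y - z| * 2 := mul_le_mul h1 h2 (abs_nonneg _) (abs_nonneg _)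
  _ = 2 * |y - z| := by ring

lemma abs_cos_sq_sub (y z : ℝ) : |Real.cos y ^ 2 - Real.cos z ^ 2| ≤ 2 * |y - z| := by
  have h : Real.cos y ^ 2 - Real.cos z ^ 2
      = (Real.cos y - Real.cos z) * (Real.cos y + Real.cos z) := by ring
  rw [h, abs_mul]
  have h1 := abs_cos_sub_cos y z
  have h2 : |Real.cos y + Real.cos z| ≤ 2 := by
    calc |Real.cos y + Real.cos z| ≤ |Real.cos y| + |Real.cos z| := abs_add_le _ _
    _ ≤ 1 + 1 := add_le_add (Real.abs_cos_le_one y) (Real.abs_cos_le_one z)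
    _ = 2 := by norm_num
  calc |Real.cos y - Real.cos z| * |Real.cos y + Real.cos z|
      ≤ |y - z| * 2 := mul_le_mul h1 h2 (abs_nonneg _) (abs_nonneg _)
  _ = 2 * |y - z| := by ring

/-- Comparison principle: a subsolution starting below a supersolution stays below it,
provided the right-hand side is locally Lipschitz in the phase variable. -/
lemma sub_super_comparison {F : ℝ → ℝ → ℝ} {u v u' v' : ℝ → ℝ}
    (hu : ∀ x, HasDerivAt u (u' x) x) (hv : ∀ x, HasDerivAt v (v' x) x)
    (hsub : ∀ x, u' x ≤ F x (u x)) (hsup : ∀ x, F x (v x) ≤ v' x)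
    (hL : ∀ b : ℝ, 0 < b → ∃ L : ℝ, 0 ≤ L ∧
      ∀ x ∈ Icc (0:ℝ) b, ∀ y z : ℝ, |F x y - F x z| ≤ L * |y - z|)
    (h0 : u 0 ≤ v 0) : ∀ x : ℝ, 0 ≤ x → u x ≤ v x := by
  set d : ℝ → ℝ := fun x => u x - v x with hd
  have hdc : Continuous d := by
    have h1 : Continuous u := fun_prop_continuous_of_hasDerivAt hu
    have h2 : Continuous v := fun_prop_continuous_of_hasDerivAt hv
    exact h1.sub h2
  by_contra hcon
  push_neg at hcon
  obtain ⟨x₁, hx₁0, hx₁⟩ := hcon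
  have hdx₁ : 0 < d x₁ := by simp [hd, sub_pos, hx₁]
  have hx₁pos : 0 < x₁ := by
    rcases lt_or_eq_of_le hx₁0 with h | h
    · exact h
    · exfalso; rw [← h] at hdx₁; simp [hd] at hdx₁; exact absurd h0 (not_le.2 hdx₁)
  obtain ⟨L, hL0, hLb⟩ := hL x₁ hx₁pos
  set S : Set ℝ := {x ∈ Icc (0:ℝ) x₁ | d x ≤ 0} with hS
  have hSclosed : IsClosed S := by
    have : S = Icc (0:ℝ) x₁ ∩ d ⁻¹' (Iic 0) := by ext x; simp [hS, and_comm]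
    rw [this]
    exact isClosed_Icc.inter (isClosed_Iic.preimage hdc)
  have hSne : S.Nonempty := ⟨0, ⟨le_refl 0, le_of_lt hx₁pos⟩, by simpa [hd] using h0⟩
  have hSbdd : BddAbove S := ⟨x₁, fun x hx => hx.1.2⟩
  set x₀ : ℝ := sSup S with hx₀def
  have hx₀S : x₀ ∈ S := hSclosed.csSup_mem hSne hSbdd
  have hx₀mem : x₀ ∈ Icc (0:ℝ) x₁ := hx₀S.1
  have hdx₀ : d x₀ ≤ 0 := hx₀S.2
  have hx₀lt : x₀ < x₁ := by
    rcases lt_or_eq_of_le hx₀mem.2 with h | h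
    · exact h
    · exfalso; rw [h] at hdx₀; exact absurd hdx₀ (not_le.2 hdx₁)
  have hpos : ∀ x ∈ Ioc x₀ x₁, 0 < d x := by
    intro x hx
    by_contra hxd
    push_neg at hxd
    have hxS : x ∈ S := ⟨⟨le_trans hx₀mem.1 (le_of_lt hx.1), hx.2⟩, hxd⟩
    exact absurd (le_csSup hSbdd hxS) (not_le.2 hx.1)
  -- d x₀ = 0 by right continuity
  have hdx₀0 : d x₀ = 0 := by
    refine le_antisymm hdx₀ ?_
    have htend : Tendsto d (𝓝[>] x₀) (𝓝 (d x₀)) :=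
      (hdc.tendsto x₀).mono_left nhdsWithin_le_nhds
    refine ge_of_tendsto htend ?_
    filter_upwards [Ioo_mem_nhdsGT_of_mem ⟨le_refl x₀, hx₀lt⟩] with x hx
    exact le_of_lt (hpos x ⟨hx.1, le_of_lt hx.2⟩)
  -- nonnegativity of d on [x₀, x₁)
  have hdnn : ∀ x ∈ Ico x₀ x₁, 0 ≤ d x := by
    intro x hx
    rcases eq_or_lt_of_le hx.1 with h | h
    · rw [← h, hdx₀0]
    · exact le_of_lt (hpos x ⟨h, le_of_lt hx.2⟩)
  -- Grönwall
  have key : ∀ x ∈ Icc x₀ x₁, d x ≤ gronwallBound 0 L 0 (x - x₀) := by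
    apply le_gronwallBound_of_liminf_deriv_right_le (f' := fun x => u' x - v' x)
    · exact hdc.continuousOn
    · intro x _ r hr
      exact (((hu x).sub (hv x)).hasDerivWithinAt (s := Ici x)).liminf_right_slope_le hr
    · rw [hdx₀0]
    · intro x hx
      have hmem : x ∈ Icc (0:ℝ) x₁ := ⟨le_trans hx₀mem.1 hx.1, le_of_lt hx.2⟩
      have h1 : u' x - v' x ≤ F x (u x) - F x (v x) :=
        sub_le_sub (hsub x) (hsup x)
      have h2 : F x (u x) - F x (v x) ≤ |F x (u x) - F x (v x)| := le_abs_self _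
      have h3 : |F x (u x) - F x (v x)| ≤ L * |u x - v x| := hLb x hmem _ _
      have h4 : |u x - v x| = d x := abs_of_nonneg (hdnn x hx)
      calc u' x - v' x ≤ L * |u x - v x| := le_trans h1 (le_trans h2 h3)
      _ = L * d x + 0 := by rw [h4, add_zero]
  have := key x₁ ⟨le_of_lt hx₀lt, le_refl x₁⟩
  rw [gronwallBound_ε0_δ0] at this
  exact absurd this (not_le.2 hdx₁)
where
  fun_prop_continuous_of_hasDerivAt {f f' : ℝ → ℝ} (h : ∀ x, HasDerivAt f (f' x) x) :
      Continuous f := by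
    have : Differentiable ℝ f := fun x => (h x).differentiableAt
    exact this.continuous

/-- the rotation number is nonnegative and non-decreasing in `λ`. -/
theorem rotation_number_nonneg_monotone (p q w : ℝ → ℝ)
    (hp : APplus p) (hw : APplus w) (hq : BohrAP q) (ρ : ℝ → ℝ)
    (hρ : ∀ lam : ℝ, ∃ θ : ℝ → ℝ, IsPruefer (fun x => (p x)⁻¹) q w lam θ ∧
      Tendsto (fun x => (θ x - θ 0) / x) atTop (𝓝 (ρ lam))) :
    (∀ lam : ℝ, 0 ≤ ρ lam) ∧ Monotone ρ := by
  have hppos : ∀ x, 0 < p x := hp.2 p (self_mem_Hull p)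
  have hwpos : ∀ x, 0 < w x := hw.2 w (self_mem_Hull w)
  have hpc : Continuous p := hp.1.1
  have hwc : Continuous w := hw.1.1
  have hqc : Continuous q := hq.1
  have hπ := Real.pi_pos
  -- local Lipschitz bound in the phase variable
  have hLip : ∀ lam : ℝ, ∀ b : ℝ, 0 < b → ∃ L : ℝ, 0 ≤ L ∧
      ∀ x ∈ Icc (0:ℝ) b, ∀ y z : ℝ,
        |((p x)⁻¹ * Real.cos y ^ 2 + (lam * w x - q x) * Real.sin y ^ 2) -
         ((p x)⁻¹ * Real.cos z ^ 2 + (lam * w x - q x) * Real.sin z ^ 2)| ≤ L * |y - z| := by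
    intro lam b hb
    set g : ℝ → ℝ := fun x => |(p x)⁻¹| + |lam * w x - q x| with hg
    have hgc : Continuous g := by
      have h1 : Continuous fun x => (p x)⁻¹ := hpc.inv₀ fun x => ne_of_gt (hppos x)
      exact (h1.abs).add (((continuous_const.mul hwc).sub hqc).abs)
    obtain ⟨xs, hxs, hmax'⟩ := isCompact_Icc.exists_isMaxOn
      ⟨0, le_refl 0, le_of_lt hb⟩ hgc.continuousOn
    have hmax : ∀ x ∈ Icc (0:ℝ) b, g x ≤ g xs := fun x hx => hmax' hx
    have hgnn : 0 ≤ g xs := add_nonneg (abs_nonneg _) (abs_nonneg _)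
    refine ⟨2 * g xs, by positivity, ?_⟩
    intro x hx y z
    have h1 := abs_cos_sq_sub y z
    have h2 := abs_sin_sq_sub y z
    have heq : (p x)⁻¹ * Real.cos y ^ 2 + (lam * w x - q x) * Real.sin y ^ 2 -
        ((p x)⁻¹ * Real.cos z ^ 2 + (lam * w x - q x) * Real.sin z ^ 2) =
        (p x)⁻¹ * (Real.cos y ^ 2 - Real.cos z ^ 2) +
        (lam * w x - q x) * (Real.sin y ^ 2 - Real.sin z ^ 2) := by ring
    have hgx : g x ≤ g xs := hmax x hx
    calc |(p x)⁻¹ * Real.cos y ^ 2 + (lam * w x - q x) * Real.sin y ^ 2 -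
        ((p x)⁻¹ * Real.cos z ^ 2 + (lam * w x - q x) * Real.sin z ^ 2)|
        = |(p x)⁻¹ * (Real.cos y ^ 2 - Real.cos z ^ 2) +
          (lam * w x - q x) * (Real.sin y ^ 2 - Real.sin z ^ 2)| := by rw [heq]
      _ ≤ |(p x)⁻¹| * |Real.cos y ^ 2 - Real.cos z ^ 2| +
          |lam * w x - q x| * |Real.sin y ^ 2 - Real.sin z ^ 2| := by
            refine le_trans (abs_add_le _ _) ?_
            rw [abs_mul, abs_mul]
      _ ≤ |(p x)⁻¹| * (2 * |y - z|) + |lam * w x - q x| * (2 * |y - z|) :=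
          add_le_add (mul_le_mul_of_nonneg_left h1 (abs_nonneg _))
            (mul_le_mul_of_nonneg_left h2 (abs_nonneg _))
      _ = 2 * g x * |y - z| := by rw [hg]; ring
      _ ≤ 2 * g xs * |y - z| := by
          have := mul_le_mul_of_nonneg_right hgx (abs_nonneg (y - z))
          nlinarith [abs_nonneg (y - z)]
  -- Part 1 : nonnegativity
  have hnonneg : ∀ lam : ℝ, 0 ≤ ρ lam := by
    intro lam
    obtain ⟨θ, hθ, htend⟩ := hρ lam
    set k : ℤ := ⌊θ 0 / Real.pi⌋ with hkdef
    have hk0 : (k : ℝ) * Real.pi ≤ θ 0 := (le_div_iff₀ hπ).1 (Int.floor_le _)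
    have hsk : Real.sin ((k : ℝ) * Real.pi) = 0 := Real.sin_int_mul_pi k
    have hck : Real.cos ((k : ℝ) * Real.pi) ^ 2 = 1 := by
      have h := Real.sin_sq_add_cos_sq ((k : ℝ) * Real.pi)
      rw [hsk] at h; nlinarith
    have hcomp := sub_super_comparison
      (F := fun x y => (p x)⁻¹ * Real.cos y ^ 2 + (lam * w x - q x) * Real.sin y ^ 2)
      (u := fun _ => (k : ℝ) * Real.pi) (u' := fun _ => 0) (v := θ)
      (v' := fun x => (p x)⁻¹ * Real.cos (θ x) ^ 2 + (lam * w x - q x) * Real.sin (θ x) ^ 2)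
      (fun x => hasDerivAt_const x _) hθ
      (fun x => by
        show (0:ℝ) ≤ (p x)⁻¹ * Real.cos ((k : ℝ) * Real.pi) ^ 2 +
          (lam * w x - q x) * Real.sin ((k : ℝ) * Real.pi) ^ 2
        rw [hsk, hck]
        have : (0:ℝ) ≤ (p x)⁻¹ := inv_nonneg.2 (le_of_lt (hppos x))
        simpa using this)
      (fun x => le_refl _) (hLip lam) hk0
    have hineq : ∀ᶠ x in atTop, ((k : ℝ) * Real.pi - θ 0) / x ≤ (θ x - θ 0) / x := by
      filter_upwards [eventually_gt_atTop (0:ℝ)] with x hx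
      have h2 : (k : ℝ) * Real.pi ≤ θ x := hcomp x (le_of_lt hx)
      exact (div_le_div_iff_of_pos_right hx).2 (by linarith)
    have hlim0 : Tendsto (fun x : ℝ => ((k : ℝ) * Real.pi - θ 0) / x) atTop (𝓝 0) :=
      tendsto_const_nhds.div_atTop tendsto_id
    exact le_of_tendsto_of_tendsto hlim0 htend hineq
  refine ⟨hnonneg, ?_⟩
  -- Part 2 : monotonicity
  intro lam1 lam2 hle
  obtain ⟨θ₁, hθ₁, ht₁⟩ := hρ lam1
  obtain ⟨θ₂, hθ₂, ht₂⟩ := hρ lam2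
  set k : ℤ := ⌈(θ₁ 0 - θ₂ 0) / Real.pi⌉ with hkdef
  have hk : θ₁ 0 - θ₂ 0 ≤ (k : ℝ) * Real.pi := (div_le_iff₀ hπ).1 (Int.le_ceil _)
  have hsq : ∀ s : ℝ, ((-1 : ℝ) ^ k * s) ^ 2 = s ^ 2 := by
    intro s
    have h1 : ((-1 : ℝ) ^ k) ^ 2 = 1 := by
      rw [← zpow_natCast ((-1 : ℝ) ^ k) 2, ← zpow_mul, mul_comm, zpow_mul]
      norm_num
    rw [mul_pow, h1, one_mul]
  have hcomp := sub_super_comparison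
    (F := fun x y => (p x)⁻¹ * Real.cos y ^ 2 + (lam2 * w x - q x) * Real.sin y ^ 2)
    (u := θ₁)
    (u' := fun x => (p x)⁻¹ * Real.cos (θ₁ x) ^ 2 + (lam1 * w x - q x) * Real.sin (θ₁ x) ^ 2)
    (v := fun x => θ₂ x + (k : ℝ) * Real.pi)
    (v' := fun x => (p x)⁻¹ * Real.cos (θ₂ x) ^ 2 + (lam2 * w x - q x) * Real.sin (θ₂ x) ^ 2)
    hθ₁ (fun x => (hθ₂ x).add_const _)
    (fun x => by
      show (p x)⁻¹ * Real.cos (θ₁ x) ^ 2 + (lam1 * w x - q x) * Real.sin (θ₁ x) ^ 2 ≤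
        (p x)⁻¹ * Real.cos (θ₁ x) ^ 2 + (lam2 * w x - q x) * Real.sin (θ₁ x) ^ 2
      have hwle : lam1 * w x ≤ lam2 * w x :=
        mul_le_mul_of_nonneg_right hle (le_of_lt (hwpos x))
      have := mul_le_mul_of_nonneg_right (sub_le_sub_right hwle (q x))
        (sq_nonneg (Real.sin (θ₁ x)))
      linarith)
    (fun x => by
      show (p x)⁻¹ * Real.cos (θ₂ x + (k : ℝ) * Real.pi) ^ 2 +
          (lam2 * w x - q x) * Real.sin (θ₂ x + (k : ℝ) * Real.pi) ^ 2 ≤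
        (p x)⁻¹ * Real.cos (θ₂ x) ^ 2 + (lam2 * w x - q x) * Real.sin (θ₂ x) ^ 2
      rw [Real.cos_add_int_mul_pi, Real.sin_add_int_mul_pi, hsq, hsq])
    (hLip lam2) (by show θ₁ 0 ≤ θ₂ 0 + (k : ℝ) * Real.pi; linarith)
  set c : ℝ := θ₂ 0 + (k : ℝ) * Real.pi - θ₁ 0 with hcdef
  have hineq : ∀ᶠ x in atTop,
      (θ₁ x - θ₁ 0) / x ≤ ((θ₂ x - θ₂ 0) + c) / x := by
    filter_upwards [eventually_gt_atTop (0:ℝ)] with x hx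
    have hnum : θ₁ x - θ₁ 0 ≤ (θ₂ x - θ₂ 0) + c := by
      have h2 : θ₁ x ≤ θ₂ x + (k : ℝ) * Real.pi := hcomp x (le_of_lt hx)
      simp only [hcdef]; linarith
    exact (div_le_div_iff_of_pos_right hx).2 hnum
  have hrt : Tendsto (fun x => ((θ₂ x - θ₂ 0) + c) / x) atTop (𝓝 (ρ lam2)) := by
    have h := ht₂.add ((tendsto_const_nhds (x := c)).div_atTop tendsto_id)
    rw [add_zero] at h
    simpa [add_div] using h
  exact le_of_tendsto_of_tendsto ht₁ hrt hineq
end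
end

section
/- Let p, w ∈ AP₊(ℝ,ℝ) and q : ℝ → ℝ Bohr almost periodic, with v = (1/p, q, w). Then the rotation number λ ↦ ρ(λ, v) is a continuous function of λ ∈ ℝ. -/
open Filter Topology MeasureTheory Set

noncomputable section

/-!
For `λ` near `λ₀`, the difference `Δ = θ_λ - θ_{λ₀}` of two Prüfer angles satisfies
`|Δ'| ≤ C |sin Δ| + ε` with `ε = W |λ - λ₀|`, because the two right-hand sides differ by
`(λ₀ w - q - 1/p) (sin² θ_λ - sin² θ_{λ₀}) + (λ - λ₀) w sin² θ_λ`. If `V` is a primitive of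
`1 / (C |sin u| + ε)`, then `V ∘ Δ` is `1`-Lipschitz while `V d` grows like `d T / π` with
`T = ∫₀^π du / (C |sin u| + ε)`; hence `|ρ λ - ρ λ₀| ≤ π / T`. Finally
`T ≥ C⁻¹ log (1 + C π / ε) → ∞` as `ε → 0`.
-/

open Real

lemma BohrAP.exists_tendsto_mem_hull {E : Type*} [NormedAddCommGroup E] {f : ℝ → E}
    (hf : BohrAP f) (t : ℕ → ℝ) :
    ∃ (s : ℕ → ℕ) (g : ℝ → E), StrictMono s ∧ g ∈ Hull f ∧
      Tendsto (fun n => f (t (s n))) atTop (𝓝 (g 0)) := by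
  obtain ⟨s, g, hs, hg⟩ := hf.2 t
  exact ⟨s, g, hs, ⟨_, hg⟩, by simpa only [zero_add] using hg.tendsto_at 0⟩

lemma BohrAP.exists_abs_le {f : ℝ → ℝ} (hf : BohrAP f) : ∃ M > 0, ∀ x, |f x| ≤ M := by
  by_contra! hunb
  choose t ht using fun n : ℕ => hunb (n + 1) n.cast_add_one_pos
  obtain ⟨s, g, hs, -, hlim⟩ := hf.exists_tendsto_mem_hull t
  exact not_tendsto_atTop_of_tendsto_nhds hlim.abs <|
    tendsto_atTop_mono (fun n => (lt_add_one _).le.trans (ht (s n)).le)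
      (tendsto_natCast_atTop_atTop.comp hs.tendsto_atTop)

lemma APplus.exists_pos_le {f : ℝ → ℝ} (hf : APplus f) : ∃ m > 0, ∀ x, m ≤ f x := by
  by_contra! hsmall
  choose t ht using fun n : ℕ => hsmall (1 / (n + 1)) Nat.one_div_pos_of_nat
  obtain ⟨s, g, hs, hg, hlim⟩ := hf.1.exists_tendsto_mem_hull t
  have hg0 : g 0 ≤ 0 := le_of_tendsto_of_tendsto' hlim
    ((tendsto_one_div_add_atTop_nhds_zero_nat (𝕜 := ℝ)).comp hs.tendsto_atTop)
    fun n => (ht (s n)).le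
  exact (hf.2 g hg 0).not_ge hg0

lemma Real.sin_sq_sub_sin_sq (x y : ℝ) : sin x ^ 2 - sin y ^ 2 = sin (x + y) * sin (x - y) := by
  rw [sin_add, sin_sub]
  linear_combination sin y ^ 2 * sin_sq_add_cos_sq x - sin x ^ 2 * sin_sq_add_cos_sq y

namespace IsPruefer

variable {a q w θ θ₁ θ₂ : ℝ → ℝ} {lam l₁ l₂ : ℝ}

lemma differentiable (h : IsPruefer a q w lam θ) : Differentiable ℝ θ :=
  fun x => (h x).differentiableAt

lemma abs_deriv_sub_le {C W : ℝ} (h₁ : IsPruefer a q w l₁ θ₁) (h₂ : IsPruefer a q w l₂ θ₂)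
    (hC : ∀ x, |l₁ * w x - q x - a x| ≤ C) (hW : ∀ x, |w x| ≤ W) (x : ℝ) :
    |deriv (θ₂ - θ₁) x| ≤ C * |sin ((θ₂ - θ₁) x)| + W * |l₂ - l₁| := by
  have hderiv : deriv (θ₂ - θ₁) x =
      (l₁ * w x - q x - a x) * (sin (θ₂ x + θ₁ x) * sin ((θ₂ - θ₁) x))
        + (l₂ - l₁) * (w x * sin (θ₂ x) ^ 2) := by
    rw [((h₂ x).sub (h₁ x)).deriv, Pi.sub_apply, ← sin_sq_sub_sin_sq, cos_sq', cos_sq']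
    ring
  have hsum : |sin (θ₂ x + θ₁ x)| ≤ 1 := abs_sin_le_one _
  have hsq : sin (θ₂ x) ^ 2 ≤ 1 := sin_sq_le_one _
  rw [hderiv]
  refine (abs_add_le _ _).trans (add_le_add ?_ ?_)
  · rw [abs_mul, abs_mul, ← mul_assoc]
    gcongr
    simpa using mul_le_mul (hC x) hsum (abs_nonneg _) ((abs_nonneg _).trans (hC x))
  · rw [abs_mul, mul_comm W, abs_mul, abs_of_nonneg (sq_nonneg (sin (θ₂ x)))]
    gcongr
    simpa using mul_le_mul (hW x) hsq (sq_nonneg _) ((abs_nonneg _).trans (hW x))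

end IsPruefer

lemma Function.Periodic.exists_abs_primitive_sub_le {h : ℝ → ℝ} {P : ℝ} (hper : h.Periodic P)
    (hP : P ≠ 0) (hh : Continuous h) :
    ∃ B, ∀ d, |(∫ u in (0)..d, h u) - d / P * ∫ u in (0)..P, h u| ≤ B := by
  have hint : ∀ a b, IntervalIntegrable h volume a b := hh.intervalIntegrable
  set φ := fun d => (∫ u in (0)..d, h u) - d / P * ∫ u in (0)..P, h u
  have hφ : φ.Periodic P := fun d => by
    simp only [φ, hper.intervalIntegral_add_eq_add 0 d hint, zero_add]
    field_simp
    ring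
  have hcont : Continuous φ := by
    have := intervalIntegral.continuous_primitive hint 0
    fun_prop
  obtain ⟨B, hB⟩ := isBounded_iff_forall_norm_le.1 (hφ.isBounded_of_continuous hP hcont)
  exact ⟨B, fun d => hB _ ⟨d, rfl⟩⟩

lemma abs_le_of_tendsto_div_of_abs_le {f : ℝ → ℝ} {a b D : ℝ}
    (hlim : Tendsto (fun x => f x / x) atTop (𝓝 D)) (hb : ∀ᶠ x in atTop, |f x| ≤ a * x + b) :
    |D| ≤ a := by
  have hbound : Tendsto (fun x : ℝ => a + b / x) atTop (𝓝 a) := by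
    simpa using tendsto_const_nhds.add (tendsto_const_nhds.div_atTop (tendsto_id (α := ℝ)))
  refine le_of_tendsto_of_tendsto hlim.abs hbound ?_
  filter_upwards [hb, eventually_gt_atTop 0] with x hx hx0
  rw [abs_div, abs_of_pos hx0, div_le_iff₀ hx0, add_mul, div_mul_cancel₀ _ hx0.ne']
  exact hx

lemma abs_le_div_integral_inv_of_abs_deriv_le {g Δ : ℝ → ℝ} {P D : ℝ} (hP : 0 < P)
    (hg : Continuous g) (hg0 : ∀ u, 0 < g u) (hper : g.Periodic P) (hΔ : Differentiable ℝ Δ)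
    (hb : ∀ x, |deriv Δ x| ≤ g (Δ x))
    (hlim : Tendsto (fun x => (Δ x - Δ 0) / x) atTop (𝓝 D)) :
    |D| ≤ P / ∫ u in (0)..P, (g u)⁻¹ := by
  set T := ∫ u in (0)..P, (g u)⁻¹
  set V := fun d => ∫ u in (0)..d, (g u)⁻¹
  have hinv : Continuous fun u => (g u)⁻¹ := hg.inv₀ fun u => (hg0 u).ne'
  have hT : 0 < T := intervalIntegral.intervalIntegral_pos_of_pos_on
    (hinv.intervalIntegrable _ _) (fun u _ => inv_pos.2 (hg0 u)) hP
  have hV : ∀ d, HasDerivAt V (g d)⁻¹ d := fun d =>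
    (hinv.integral_hasStrictDerivAt 0 d).hasDerivAt
  have hVΔ : ∀ x, |V (Δ x) - V (Δ 0)| ≤ |x| := by
    have hderiv : ∀ x, HasDerivAt (V ∘ Δ) ((g (Δ x))⁻¹ * deriv Δ x) x := fun x =>
      (hV (Δ x)).comp x (hΔ x).hasDerivAt
    have hderiv_le : ∀ x, ‖deriv (V ∘ Δ) x‖ ≤ 1 := fun x => by
      rw [(hderiv x).deriv, norm_mul, norm_inv, Real.norm_eq_abs, Real.norm_eq_abs,
        abs_of_pos (hg0 _), inv_mul_le_one₀ (hg0 _)]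
      exact hb x
    intro x
    simpa using convex_univ.norm_image_sub_le_of_norm_deriv_le
      (fun x _ => (hderiv x).differentiableAt) (fun x _ => hderiv_le x)
      (mem_univ 0) (mem_univ x)
  obtain ⟨B, hB⟩ : ∃ B, ∀ d, |V d - d / P * T| ≤ B :=
    (hper.comp Inv.inv).exists_abs_primitive_sub_le hP.ne' hinv
  refine abs_le_of_tendsto_div_of_abs_le (b := P / T * (2 * B)) hlim
    ((eventually_ge_atTop 0).mono fun x hx => ?_)
  obtain ⟨h₁, h₁'⟩ := abs_le.1 (hB (Δ x))
  obtain ⟨h₀, h₀'⟩ := abs_le.1 (hB (Δ 0))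
  obtain ⟨hV₁, hV₁'⟩ := abs_le.1 ((hVΔ x).trans_eq (abs_of_nonneg hx))
  have hlin : |T / P * (Δ x - Δ 0)| ≤ x + 2 * B := by
    rw [show T / P * (Δ x - Δ 0) = Δ x / P * T - Δ 0 / P * T by ring, abs_le]
    constructor <;> linarith
  rw [abs_mul, abs_of_pos (div_pos hT hP)] at hlin
  rw [← mul_add, div_mul_eq_mul_div, le_div_iff₀ hT]
  rw [div_mul_eq_mul_div, div_le_iff₀ hP] at hlin
  linarith

lemma integral_inv_mul_add {C ε b : ℝ} (hC : 0 < C) (hε : 0 < ε) (hb : 0 ≤ b) :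
    ∫ u in (0)..b, (C * u + ε)⁻¹ = C⁻¹ * log ((C * b + ε) / ε) := by
  rw [intervalIntegral.integral_comp_mul_add (f := fun x => x⁻¹) hC.ne',
    integral_inv_of_pos (by simpa using hε) (by positivity)]
  simp

lemma tendsto_integral_inv_mul_abs_sin_add {C : ℝ} (hC : 0 < C) :
    Tendsto (fun ε => ∫ u in (0)..π, (C * |sin u| + ε)⁻¹) (𝓝[>] 0) atTop := by
  have hlog : Tendsto (fun ε => C⁻¹ * log ((C * π + ε) / ε)) (𝓝[>] 0) atTop := by
    have hlin : Tendsto (fun ε : ℝ => C * π * ε⁻¹ + 1) (𝓝[>] 0) atTop :=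
      (tendsto_inv_nhdsGT_zero.const_mul_atTop (by positivity)).atTop_add tendsto_const_nhds
    refine ((tendsto_log_atTop.comp hlin).const_mul_atTop (inv_pos.2 hC)).congr' ?_
    filter_upwards [self_mem_nhdsWithin] with ε (hε : 0 < ε)
    rw [Function.comp_apply, add_div, div_self hε.ne', div_eq_mul_inv]
  refine tendsto_atTop_mono' _ ?_ hlog
  filter_upwards [self_mem_nhdsWithin] with ε (hε : 0 < ε)
  rw [← integral_inv_mul_add hC hε pi_pos.le]
  refine intervalIntegral.integral_mono_on pi_pos.le ?_ ?_ fun u hu => ?_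
  · refine (ContinuousOn.inv₀ (by fun_prop) fun u hu => ?_).intervalIntegrable
    rw [uIcc_of_le pi_pos.le] at hu
    nlinarith [hu.1]
  · refine (Continuous.inv₀ (by fun_prop) fun u => ?_).intervalIntegrable _ _
    positivity
  · have := abs_sin_le_abs (x := u)
    rw [abs_of_nonneg hu.1] at this
    gcongr

lemma exists_abs_mul_sub_sub_inv_le {p q w : ℝ → ℝ} (hp : APplus p) (hq : BohrAP q)
    (hw : BohrAP w) (l : ℝ) : ∃ C > 0, ∀ x, |l * w x - q x - (p x)⁻¹| ≤ C := by
  obtain ⟨Mq, hMq0, hMq⟩ := hq.exists_abs_le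
  obtain ⟨Mw, hMw0, hMw⟩ := hw.exists_abs_le
  obtain ⟨m, hm, hmp⟩ := hp.exists_pos_le
  refine ⟨|l| * Mw + Mq + m⁻¹, by positivity, fun x => ?_⟩
  have hinv : |(p x)⁻¹| ≤ m⁻¹ := by
    rw [abs_inv, abs_of_pos (hm.trans_le (hmp x))]
    exact inv_anti₀ hm (hmp x)
  have hlw : |l * w x| ≤ |l| * Mw := by
    rw [abs_mul]
    exact mul_le_mul_of_nonneg_left (hMw x) (abs_nonneg l)
  linarith [abs_sub (l * w x - q x) (p x)⁻¹, abs_sub (l * w x) (q x), hMq x]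

lemma tendsto_const_mul_abs_sub_nhdsNE {W : ℝ} (hW : 0 < W) (l₀ : ℝ) :
    Tendsto (fun l => W * |l - l₀|) (𝓝[≠] l₀) (𝓝[>] 0) := by
  refine tendsto_nhdsWithin_iff.2 ⟨tendsto_nhdsWithin_of_tendsto_nhds ?_,
    eventually_nhdsWithin_of_forall fun l hl => mul_pos hW (abs_pos.2 (sub_ne_zero.2 hl))⟩
  simpa using ((continuous_sub_right l₀).abs.const_mul W).tendsto l₀

/-- the rotation number is continuous in `λ`. -/
theorem rotation_number_continuous (p q w : ℝ → ℝ)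
    (hp : APplus p) (hw : APplus w) (hq : BohrAP q) (ρ : ℝ → ℝ)
    (hρ : ∀ lam : ℝ, ∃ θ : ℝ → ℝ, IsPruefer (fun x => (p x)⁻¹) q w lam θ ∧
      Tendsto (fun x => (θ x - θ 0) / x) atTop (𝓝 (ρ lam))) :
    Continuous ρ := by
  obtain ⟨W, hW, hMw⟩ := hw.1.exists_abs_le
  refine continuous_iff_continuousAt.2 fun l₀ => ?_
  obtain ⟨C, hC0, hC⟩ := exists_abs_mul_sub_sub_inv_le hp hq hw.1 l₀
  obtain ⟨θ₀, hθ₀, hρ₀⟩ := hρ l₀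
  have hε := tendsto_const_mul_abs_sub_nhdsNE hW l₀
  have hbound : ∀ᶠ l in 𝓝[≠] l₀,
      ‖ρ l - ρ l₀‖ ≤ π / ∫ u in (0)..π, (C * |sin u| + W * |l - l₀|)⁻¹ := by
    filter_upwards [(tendsto_nhdsWithin_iff.1 hε).2] with l (hl : 0 < W * |l - l₀|)
    obtain ⟨θ, hθ, hρl⟩ := hρ l
    refine abs_le_div_integral_inv_of_abs_deriv_le pi_pos (by fun_prop)
      (fun u => by positivity) (fun u => by simp [sin_add_pi])
      (hθ.differentiable.sub hθ₀.differentiable) (hθ₀.abs_deriv_sub_le hθ hC hMw) ?_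
    refine (hρl.sub hρ₀).congr fun x => ?_
    simp only [Pi.sub_apply]
    ring
  rw [← continuousWithinAt_compl_self, ContinuousWithinAt, tendsto_iff_norm_sub_tendsto_zero]
  exact squeeze_zero' (Eventually.of_forall fun l => norm_nonneg _) hbound
    (tendsto_const_nhds.div_atTop ((tendsto_integral_inv_mul_abs_sin_add hC0).comp hε))
end
end

section
/- If f ∈ AP₊(ℝ,ℝ), then there exists a constant δ > 0 such that f(x) ≥ δ for all x ∈ ℝ. -/
open Filter Topology MeasureTheory Set

noncomputable section

/-- an `AP₊` function is bounded away from zero. -/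
theorem APplus_bounded_below (f : ℝ → ℝ) (hf : APplus f) :
    ∃ δ : ℝ, 0 < δ ∧ ∀ x : ℝ, δ ≤ f x := by
  by_contra h
  push_neg at h
  have ht : ∀ n : ℕ, ∃ x : ℝ, f x < 1 / (n + 1) := by
    intro n
    obtain ⟨x, hx⟩ := h (1 / (n + 1)) (by positivity)
    exact ⟨x, hx⟩
  choose t htlt using ht
  obtain ⟨s, g, hs, hg⟩ := hf.1.2 t
  have hmem : g ∈ Hull f := ⟨fun n => t (s n), hg⟩
  have hpos := hf.2 g hmem 0
  have hpt : Tendsto (fun n => f (0 + t (s n))) atTop (𝓝 (g 0)) :=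
    hg.tendsto_at 0
  have hle : g 0 ≤ 0 := by
    have h0 : Tendsto (fun n : ℕ => 1 / ((n : ℝ) + 1)) atTop (𝓝 0) :=
      tendsto_one_div_add_atTop_nhds_zero_nat
    refine le_of_tendsto_of_tendsto hpt h0 ?_
    filter_upwards with n
    have h1 : f (0 + t (s n)) < 1 / ((s n : ℝ) + 1) := by
      simpa using htlt (s n)
    have h2 : (1 : ℝ) / ((s n : ℝ) + 1) ≤ 1 / ((n : ℝ) + 1) := by
      apply one_div_le_one_div_of_le (by positivity)
      have h3 : (n : ℝ) ≤ (s n : ℝ) := Nat.cast_le.mpr hs.le_apply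
      linarith
    exact (h1.le.trans h2)
  linarith
end
end

section
/- Let f : ℝ → ℝ be Bohr almost periodic and let g be an element of the hull E(f). Then g is Bohr almost periodic and its frequency module equals that of f: M_g = M_f. -/
open Filter Topology MeasureTheory Set

noncomputable section

/-!
Membership in the hull is symmetric: if `f (· + τₙ) → g` uniformly, then `g (· - τₙ) → f`.
Translates of `g` along any sequence stay uniformly within `ε` of translates of `f`, so a
subsequence along which the translates of `f` converge makes those of `g` uniformly Cauchy.
For the frequencies, translating a function changes its Fourier means only by a unimodular
factor and an `O(1/T)` error, and an `ε`-uniform perturbation moves them by at most `ε`;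
hence a vanishing Fourier coefficient of `f` vanishes for every element of its hull, and by
symmetry conversely.
-/

section Hull

variable {E : Type*} [NormedAddCommGroup E] {f g : ℝ → E}

theorem mem_hull_symm (hg : g ∈ Hull f) : f ∈ Hull g := by
  obtain ⟨τ, hτ⟩ := hg
  refine ⟨fun n => -τ n, ?_⟩
  rw [Metric.tendstoUniformly_iff] at hτ ⊢
  intro ε hε
  filter_upwards [hτ ε hε] with n hn x
  simpa [dist_comm, ← sub_eq_add_neg] using hn (x - τ n)

theorem continuous_of_mem_hull (hf : Continuous f) (hg : g ∈ Hull f) : Continuous g := by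
  obtain ⟨τ, hτ⟩ := hg
  exact hτ.continuous (.of_forall fun n => hf.comp (continuous_add_const (τ n)))

theorem UniformContinuous.comp_mem_hull {F : Type*} [NormedAddCommGroup F] {φ : E → F}
    (hφ : UniformContinuous φ) (hg : g ∈ Hull f) : φ ∘ g ∈ Hull (φ ∘ f) := by
  obtain ⟨τ, hτ⟩ := hg
  exact ⟨τ, hφ.comp_tendstoUniformly hτ⟩

theorem uniformCauchySeqOn_of_forall_dist_lt {ι α β : Type*} [PseudoMetricSpace β]
    {F : ι → α → β} {p : Filter ι} {s : Set α}
    (h : ∀ ε > 0, ∃ G : ι → α → β,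
      UniformCauchySeqOn G p s ∧ ∀ i, ∀ x ∈ s, dist (F i x) (G i x) < ε) :
    UniformCauchySeqOn F p s := by
  intro u hu
  obtain ⟨ε, hε, hεu⟩ := Metric.mem_uniformity_dist.mp hu
  obtain ⟨G, hG, hFG⟩ := h (ε / 3) (by positivity)
  filter_upwards [hG _ (Metric.dist_mem_uniformity (by positivity : 0 < ε / 3))] with m hm x hx
  apply hεu
  calc dist (F m.1 x) (F m.2 x)
      ≤ dist (F m.1 x) (G m.1 x) + dist (G m.1 x) (G m.2 x) + dist (G m.2 x) (F m.2 x) :=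
        dist_triangle4 _ _ _ _
    _ < ε / 3 + ε / 3 + ε / 3 := by
        gcongr
        · exact hFG _ x hx
        · exact hm x hx
        · rw [dist_comm]; exact hFG _ x hx
    _ = ε := by ring

theorem uniformCauchySeqOn_comp_add_of_mem_hull {ι : Type*} {p : Filter ι} {u : ι → ℝ}
    (hf : UniformCauchySeqOn (fun i x => f (x + u i)) p univ) (hg : g ∈ Hull f) :
    UniformCauchySeqOn (fun i x => g (x + u i)) p univ := by
  obtain ⟨τ, hτ⟩ := hg
  refine uniformCauchySeqOn_of_forall_dist_lt fun ε hε => ?_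
  obtain ⟨n, hn⟩ := (Metric.tendstoUniformly_iff.mp hτ ε hε).exists
  refine ⟨fun i x => f (x + τ n + u i), hf.comp (· + τ n), fun i x _ => ?_⟩
  have := hn (x + u i)
  rwa [add_right_comm] at this

theorem UniformCauchySeqOn.exists_tendstoUniformly {ι α β : Type*} [UniformSpace β]
    [CompleteSpace β] [Nonempty ι] [SemilatticeSup ι] {F : ι → α → β}
    (hF : UniformCauchySeqOn F atTop univ) : ∃ G, TendstoUniformly F G atTop := by
  choose G hG using fun x => cauchySeq_tendsto_of_complete (hF.cauchySeq (mem_univ x))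
  exact ⟨G, tendstoUniformlyOn_univ.mp (hF.tendstoUniformlyOn_of_tendsto fun x _ => hG x)⟩

theorem BohrAP.of_mem_hull [CompleteSpace E] (hf : BohrAP f) (hg : g ∈ Hull f) : BohrAP g := by
  refine ⟨continuous_of_mem_hull hf.1 hg, fun t => ?_⟩
  obtain ⟨s, h, hs, hh⟩ := hf.2 t
  obtain ⟨G, hG⟩ := (uniformCauchySeqOn_comp_add_of_mem_hull
    (tendstoUniformlyOn_univ.mpr hh).uniformCauchySeqOn hg).exists_tendstoUniformly
  exact ⟨s, G, hs, hG⟩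

end Hull

section FourierMean

open Complex

def fourierMean (f : ℝ → ℂ) (l T : ℝ) : ℂ :=
  (T : ℂ)⁻¹ * ∫ x in (0:ℝ)..T, f x * exp (-(I * (l : ℂ) * (x : ℂ)))

theorem mem_freqSet_iff {f : ℝ → ℝ} {l : ℝ} :
    l ∈ freqSet f ↔ ¬ Tendsto (fourierMean (fun x => f x) l) atTop (𝓝 0) :=
  Iff.rfl

variable {f g : ℝ → ℂ} {l : ℝ}

theorem ofReal_mul_fourierMean (f : ℝ → ℂ) (l T : ℝ) :
    (T : ℂ) * fourierMean f l T = ∫ x in (0:ℝ)..T, f x * exp (-(I * l * x)) := by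
  rcases eq_or_ne T 0 with rfl | hT
  · simp
  · rw [fourierMean, mul_inv_cancel_left₀ (ofReal_ne_zero.mpr hT)]

theorem intervalIntegrable_mul_exp (hf : Continuous f) (l a b : ℝ) :
    IntervalIntegrable (fun x : ℝ => f x * exp (-(I * l * x))) volume a b :=
  (by fun_prop : Continuous fun x : ℝ => f x * exp (-(I * l * x))).intervalIntegrable a b

theorem integral_comp_add_right_mul_exp (hf : Continuous f) (l t T : ℝ) :
    ∫ x in (0:ℝ)..T, f (x + t) * exp (-(I * l * x)) =
      exp (I * l * t) * ((∫ x in (0:ℝ)..(T + t), f x * exp (-(I * l * x))) -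
        ∫ x in (0:ℝ)..t, f x * exp (-(I * l * x))) := by
  have hshift := intervalIntegral.integral_comp_add_right
    (fun x : ℝ => f x * exp (-(I * l * x))) t (a := 0) (b := T)
  simp only [zero_add] at hshift
  rw [intervalIntegral.integral_interval_sub_left (intervalIntegrable_mul_exp hf _ _ _)
    (intervalIntegrable_mul_exp hf _ _ _), ← hshift, ← intervalIntegral.integral_const_mul]
  refine intervalIntegral.integral_congr fun x _ => ?_
  have hunit : exp (I * l * t) * exp (-(I * l * t)) = 1 := by
    rw [← exp_add, add_neg_cancel, exp_zero]
  rw [ofReal_add, show -(I * l * (x + t)) = -(I * l * x) + -(I * l * t) by ring, exp_add]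
  linear_combination (-(f (x + t) * exp (-(I * l * x)))) * hunit

theorem tendsto_fourierMean_comp_add_right (hf : Continuous f) (t : ℝ)
    (h : Tendsto (fourierMean f l) atTop (𝓝 0)) :
    Tendsto (fourierMean (fun x => f (x + t)) l) atTop (𝓝 0) := by
  have hinv : Tendsto (fun T : ℝ => (T : ℂ)⁻¹) atTop (𝓝 0) := by
    simpa [Function.comp_def] using (continuous_ofReal.tendsto 0).comp tendsto_inv_atTop_zero
  have hshift : Tendsto (fun T => fourierMean f l (T + t)) atTop (𝓝 0) :=
    h.comp (tendsto_atTop_add_const_right _ t tendsto_id)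
  have hlim : Tendsto (fun T : ℝ => exp (I * l * t) *
      ((1 + t * (T : ℂ)⁻¹) * fourierMean f l (T + t) -
        (T : ℂ)⁻¹ * ∫ x in (0:ℝ)..t, f x * exp (-(I * l * x)))) atTop (𝓝 0) := by
    simpa using tendsto_const_nhds.mul (((tendsto_const_nhds.add
      (tendsto_const_nhds.mul hinv)).mul hshift).sub (hinv.mul tendsto_const_nhds))
  refine hlim.congr' ?_
  filter_upwards [eventually_ne_atTop 0] with T hT
  have hT' : (T : ℂ) ≠ 0 := ofReal_ne_zero.mpr hT
  conv_rhs =>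
    rw [fourierMean, integral_comp_add_right_mul_exp hf, ← ofReal_mul_fourierMean f l (T + t)]
  push_cast
  field_simp

theorem dist_fourierMean_le (hf : Continuous f) (hg : Continuous g) {ε T : ℝ} (hT : 0 < T)
    (h : ∀ x, dist (f x) (g x) ≤ ε) : dist (fourierMean f l T) (fourierMean g l T) ≤ ε := by
  have hsub : fourierMean f l T - fourierMean g l T =
      (T : ℂ)⁻¹ * ∫ x in (0:ℝ)..T, (f x - g x) * exp (-(I * l * x)) := by
    simp_rw [fourierMean, ← mul_sub, sub_mul]
    rw [intervalIntegral.integral_sub (intervalIntegrable_mul_exp hf _ _ _)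
      (intervalIntegrable_mul_exp hg _ _ _)]
  have hbound : ‖∫ x in (0:ℝ)..T, (f x - g x) * exp (-(I * l * x))‖ ≤ ε * T := by
    simpa [abs_of_pos hT] using intervalIntegral.norm_integral_le_of_norm_le_const
      (a := 0) (b := T) fun x _ => by
        simpa [norm_exp, ← dist_eq_norm] using h x
  rw [dist_eq_norm, hsub, norm_mul, norm_inv, norm_real, Real.norm_of_nonneg hT.le]
  calc T⁻¹ * ‖∫ x in (0:ℝ)..T, (f x - g x) * exp (-(I * l * x))‖ ≤ T⁻¹ * (ε * T) := by gcongr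
    _ = ε := by field_simp

theorem tendsto_fourierMean_of_mem_hull (hf : Continuous f) (hg : g ∈ Hull f)
    (h : Tendsto (fourierMean f l) atTop (𝓝 0)) : Tendsto (fourierMean g l) atTop (𝓝 0) := by
  have hgc := continuous_of_mem_hull hf hg
  obtain ⟨τ, hτ⟩ := hg
  rw [Metric.tendsto_nhds]
  intro ε hε
  obtain ⟨n, hn⟩ := (Metric.tendstoUniformly_iff.mp hτ (ε / 2) (half_pos hε)).exists
  have hfn := Metric.tendsto_nhds.mp (tendsto_fourierMean_comp_add_right hf (τ n) h)
    (ε / 2) (half_pos hε)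
  filter_upwards [hfn, eventually_gt_atTop 0] with T hT hT0
  calc dist (fourierMean g l T) 0
      ≤ dist (fourierMean g l T) (fourierMean (fun x => f (x + τ n)) l T) +
        dist (fourierMean (fun x => f (x + τ n)) l T) 0 := dist_triangle _ _ _
    _ < ε / 2 + ε / 2 := add_lt_add_of_le_of_lt
        (dist_fourierMean_le hgc (by fun_prop) hT0 fun x => (hn x).le) hT
    _ = ε := add_halves ε

end FourierMean

theorem freqSet_subset_of_mem_hull {f g : ℝ → ℝ} (hf : Continuous f) (hg : g ∈ Hull f) :
    freqSet g ⊆ freqSet f := fun _ hl =>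
  mem_freqSet_iff.mpr fun h => mem_freqSet_iff.mp hl <| tendsto_fourierMean_of_mem_hull
    (by fun_prop) (Complex.isometry_ofReal.uniformContinuous.comp_mem_hull hg) h

theorem freqSet_eq_of_mem_hull {f g : ℝ → ℝ} (hf : Continuous f) (hg : g ∈ Hull f) :
    freqSet g = freqSet f :=
  (freqSet_subset_of_mem_hull hf hg).antisymm
    (freqSet_subset_of_mem_hull (continuous_of_mem_hull hf hg) (mem_hull_symm hg))

/-- every element of the hull of a Bohr almost periodic function is
Bohr almost periodic with the same frequency module. -/
theorem hull_freqModule (f g : ℝ → ℝ) (hf : BohrAP f) (hg : g ∈ Hull f) :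
    BohrAP g ∧ freqModule g = freqModule f :=
  ⟨hf.of_mem_hull hg, congrArg AddSubgroup.closure (freqSet_eq_of_mem_hull hf.1 hg)⟩
end
end

section
/- Let ṽ = (a, q̃, w̃) be a triple of bounded continuous real functions on ℝ with a and w̃ strictly positive, and let λ ∈ ℝ and x ∈ ℝ be fixed. Then the map Θ ↦ θ_λ(x, Θ; ṽ) is a strictly increasing homeomorphism of ℝ onto itself, and its inverse is the map Θ ↦ θ_λ(−x, Θ; ṽ·x), where ṽ·x denotes the translated triple (a(·+x), q̃(·+x), w̃(·+x)). -/
/-!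
The Prüfer field `v t y = a t cos² y + (λ w t - q t) sin² y` is Lipschitz in `y` with constant
`|λ w t - q t - a t|`, locally uniformly in `t`, and bounded on bounded time intervals; hence
solutions exist globally and are unique. Two distinct solutions can never meet, so by the
intermediate value theorem they stay ordered, and the time-`x` map `Θ ↦ θ(x)` is strictly
increasing. A time translate of a solution solves the translated equation, which makes the
time-`(-x)` map of `ṽ·x` a two-sided inverse; a strictly monotone bijection of `ℝ` is a
homeomorphism.
-/

open Filter Topology MeasureTheory Set

noncomputable section

open scoped NNReal

section GlobalFlow

variable {E : Type*} [NormedAddCommGroup E]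

structure IsGlobalPicardLindelof (v : ℝ → E → E) : Prop where
  continuous_apply : ∀ y, Continuous (v · y)
  exists_lipschitz_bound : ∀ a b : ℝ, ∃ (K : ℝ≥0) (L : ℝ≥0),
    ∀ t ∈ Icc a b, LipschitzWith K (v t) ∧ ∀ y, ‖v t y‖ ≤ L

namespace IsGlobalPicardLindelof

variable {v : ℝ → E → E}

theorem comp_add_const (hv : IsGlobalPicardLindelof v) (s : ℝ) :
    IsGlobalPicardLindelof (fun t => v (t + s)) where
  continuous_apply y := (hv.continuous_apply y).comp (continuous_add_const s)
  exists_lipschitz_bound a b := by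
    obtain ⟨K, L, hKL⟩ := hv.exists_lipschitz_bound (a + s) (b + s)
    exact ⟨K, L, fun t ht => hKL (t + s) ⟨by linarith [ht.1], by linarith [ht.2]⟩⟩

variable [NormedSpace ℝ E]

theorem eqOn_Ioo {f g : ℝ → E} {a b t₀ : ℝ} (hv : IsGlobalPicardLindelof v)
    (ht₀ : t₀ ∈ Ioo a b) (hf : ∀ t ∈ Ioo a b, HasDerivAt f (v t (f t)) t)
    (hg : ∀ t ∈ Ioo a b, HasDerivAt g (v t (g t)) t) (heq : f t₀ = g t₀) :
    EqOn f g (Ioo a b) := by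
  obtain ⟨K, _, hK⟩ := hv.exists_lipschitz_bound a b
  exact ODE_solution_unique_of_mem_Ioo (s := fun _ => univ)
    (fun t ht => (hK t (Ioo_subset_Icc_self ht)).1.lipschitzOnWith) ht₀
    (fun t ht => ⟨hf t ht, trivial⟩) (fun t ht => ⟨hg t ht, trivial⟩) heq

theorem eq_of_hasDerivAt {f g : ℝ → E} {t₀ : ℝ} (hv : IsGlobalPicardLindelof v)
    (hf : ∀ t, HasDerivAt f (v t (f t)) t) (hg : ∀ t, HasDerivAt g (v t (g t)) t)
    (heq : f t₀ = g t₀) : f = g := by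
  funext t
  obtain ⟨a, b, ht, ht₀⟩ : ∃ a b, t ∈ Ioo a b ∧ t₀ ∈ Ioo a b :=
    ⟨min t t₀ - 1, max t t₀ + 1, by grind, by grind⟩
  exact hv.eqOn_Ioo ht₀ (fun s _ => hf s) (fun s _ => hg s) heq ht

variable [CompleteSpace E]

theorem exists_forall_mem_Ioo_hasDerivAt (hv : IsGlobalPicardLindelof v) (x₀ : E) {T : ℝ}
    (hT : 0 < T) :
    ∃ α : ℝ → E, α 0 = x₀ ∧ ∀ t ∈ Ioo (-T) T, HasDerivAt α (v t (α t)) t := by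
  obtain ⟨K, L, hKL⟩ := hv.exists_lipschitz_bound (-T) T
  have hPL : IsPicardLindelof v (tmin := -T) (tmax := T) ⟨0, by simp [hT.le]⟩ x₀
      (L * T.toNNReal) 0 L K :=
    { lipschitzOnWith := fun t ht => (hKL t ht).1.lipschitzOnWith
      continuousOn := fun y _ => (hv.continuous_apply y).continuousOn
      norm_le := fun t ht y _ => (hKL t ht).2 y
      mul_max_le := by simp [hT.le] }
  obtain ⟨α, hα0, hα⟩ := hPL.exists_eq_forall_mem_Icc_hasDerivWithinAt₀
  exact ⟨α, hα0, fun t ht =>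
    (hα t (Ioo_subset_Icc_self ht)).hasDerivAt (Icc_mem_nhds ht.1 ht.2)⟩

theorem exists_hasDerivAt (hv : IsGlobalPicardLindelof v) (x₀ : E) :
    ∃ α : ℝ → E, α 0 = x₀ ∧ ∀ t, HasDerivAt α (v t (α t)) t := by
  choose f hf0 hf using fun n : ℕ =>
    hv.exists_forall_mem_Ioo_hasDerivAt x₀ (T := n + 1) (by positivity)
  have hmem (s : ℝ) : s ∈ Ioo (-(⌊|s|⌋₊ + 1 : ℝ)) (⌊|s|⌋₊ + 1) :=
    abs_lt.mp (Nat.lt_floor_add_one |s|)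
  have hext (n : ℕ) (s : ℝ) (hs : |s| < n + 1) : f ⌊|s|⌋₊ s = f n s := by
    have hle : (⌊|s|⌋₊ : ℝ) ≤ n := by
      exact_mod_cast Nat.le_of_lt_succ
        ((Nat.floor_lt (abs_nonneg s)).mpr (by exact_mod_cast hs))
    have hsub : Ioo (-(⌊|s|⌋₊ + 1 : ℝ)) (⌊|s|⌋₊ + 1) ⊆ Ioo (-(n + 1 : ℝ)) (n + 1) :=
      Ioo_subset_Ioo (by linarith) (by linarith)
    have hpos := Nat.cast_add_one_pos (α := ℝ) ⌊|s|⌋₊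
    exact hv.eqOn_Ioo ⟨by linarith, hpos⟩ (hf _) (fun t ht => hf n t (hsub ht))
      ((hf0 _).trans (hf0 n).symm) (hmem s)
  -- by `hext`, near `t` the glued curve is the local solution `f ⌊|t|⌋₊`
  refine ⟨fun t => f ⌊|t|⌋₊ t, by simpa using hf0 0, fun t => ?_⟩
  have hnhds : {s : ℝ | |s| < ⌊|t|⌋₊ + 1} ∈ 𝓝 t :=
    (isOpen_lt continuous_abs continuous_const).mem_nhds (Nat.lt_floor_add_one |t|)
  exact (hf _ t (hmem t)).congr_of_eventuallyEq
    (eventually_of_mem hnhds fun s hs => hext _ s hs)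

end IsGlobalPicardLindelof

end GlobalFlow

namespace IsGlobalPicardLindelof

variable {v : ℝ → ℝ → ℝ}

theorem lt_of_hasDerivAt (hv : IsGlobalPicardLindelof v) {f g : ℝ → ℝ}
    (hf : ∀ t, HasDerivAt f (v t (f t)) t) (hg : ∀ t, HasDerivAt g (v t (g t)) t) {t₀ : ℝ}
    (h : f t₀ < g t₀) (t : ℝ) : f t < g t := by
  by_contra! hle
  have hcont : Continuous (g - f) :=
    (continuous_iff_continuousAt.2 fun t => (hg t).continuousAt).sub
      (continuous_iff_continuousAt.2 fun t => (hf t).continuousAt)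
  obtain ⟨c, -, hc⟩ : (0 : ℝ) ∈ (g - f) '' uIcc t₀ t :=
    intermediate_value_uIcc hcont.continuousOn
      (mem_uIcc.mpr (Or.inr ⟨sub_nonpos.mpr hle, (sub_pos.mpr h).le⟩))
  have hfg : f = g := hv.eq_of_hasDerivAt hf hg (sub_eq_zero.mp hc).symm
  exact h.ne (congrFun hfg t₀)

end IsGlobalPicardLindelof

def prueferField (A B : ℝ → ℝ) (t y : ℝ) : ℝ :=
  A t * Real.cos y ^ 2 + B t * Real.sin y ^ 2

theorem hasDerivAt_prueferField (A B : ℝ → ℝ) (t y : ℝ) :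
    HasDerivAt (prueferField A B t) ((B t - A t) * Real.sin (2 * y)) y := by
  refine ((((Real.hasDerivAt_cos y).pow 2).const_mul (A t)).add
    (((Real.hasDerivAt_sin y).pow 2).const_mul (B t))).congr_deriv ?_
  rw [Real.sin_two_mul]
  ring

theorem lipschitzWith_prueferField (A B : ℝ → ℝ) (t : ℝ) :
    LipschitzWith ‖B t - A t‖₊ (prueferField A B t) := by
  refine lipschitzWith_of_nnnorm_deriv_le
    (fun y => (hasDerivAt_prueferField A B t y).differentiableAt) fun y => ?_
  rw [(hasDerivAt_prueferField A B t y).deriv, nnnorm_mul]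
  refine mul_le_of_le_one_right' ?_
  rw [← NNReal.coe_le_coe, coe_nnnorm]
  exact Real.abs_sin_le_one _

theorem abs_prueferField_le (A B : ℝ → ℝ) (t y : ℝ) :
    |prueferField A B t y| ≤ |A t| + |B t| := by
  unfold prueferField
  calc |A t * Real.cos y ^ 2 + B t * Real.sin y ^ 2|
      ≤ |A t| * Real.cos y ^ 2 + |B t| * Real.sin y ^ 2 := by
        refine (abs_add_le _ _).trans_eq ?_
        rw [abs_mul, abs_mul, abs_sq, abs_sq]
    _ ≤ |A t| + |B t| := by
        gcongr <;> nlinarith [Real.cos_sq_le_one y, Real.sin_sq_le_one y,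
          abs_nonneg (A t), abs_nonneg (B t)]

theorem isGlobalPicardLindelof_prueferField {A B : ℝ → ℝ} (hA : Continuous A)
    (hB : Continuous B) : IsGlobalPicardLindelof (prueferField A B) where
  continuous_apply y := by unfold prueferField; fun_prop
  exists_lipschitz_bound a b := by
    obtain ⟨C, hC⟩ := (isCompact_Icc (a := a) (b := b)).exists_bound_of_continuousOn
      (f := fun t => |A t| + |B t|) (by fun_prop)
    refine ⟨C.toNNReal, C.toNNReal, fun t ht => ?_⟩
    have hCt : |A t| + |B t| ≤ C := (Real.le_norm_self _).trans (hC t ht)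
    refine ⟨(lipschitzWith_prueferField A B t).weaken ?_, fun y => ?_⟩
    · rw [Real.le_toNNReal_iff_coe_le ((add_nonneg (abs_nonneg _) (abs_nonneg _)).trans hCt),
        coe_nnnorm, Real.norm_eq_abs]
      exact (abs_sub _ _).trans (by linarith)
    · rw [Real.norm_eq_abs]
      exact (abs_prueferField_le A B t y).trans (hCt.trans (Real.le_coe_toNNReal C))

theorem pruefer_homeomorph_general (a q w : ℝ → ℝ)
    (ha : Continuous a) (hq : Continuous q) (hw : Continuous w)
    (lam x : ℝ) :
    ∃ F G : ℝ → ℝ,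
      (∀ (Θ : ℝ) (θ : ℝ → ℝ), IsPruefer a q w lam θ → θ 0 = Θ → θ x = F Θ) ∧
      (∀ (Θ : ℝ) (θ : ℝ → ℝ),
        IsPruefer (fun y => a (y + x)) (fun y => q (y + x)) (fun y => w (y + x)) lam θ →
        θ 0 = Θ → θ (-x) = G Θ) ∧
      StrictMono F ∧ Continuous F ∧ Continuous G ∧
      (∀ Θ : ℝ, G (F Θ) = Θ) ∧ (∀ Θ : ℝ, F (G Θ) = Θ) := by
  -- `IsPruefer a q w lam θ` unfolds to `∀ t, HasDerivAt θ (v t (θ t)) t`, and the Prüfer field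
  -- of the translated triple is `fun t => v (t + x)`
  set v := prueferField a (fun t => lam * w t - q t)
  have hv : IsGlobalPicardLindelof v := isGlobalPicardLindelof_prueferField ha (by fun_prop)
  have hv' := hv.comp_add_const x
  choose θ hθ0 hθ using hv.exists_hasDerivAt
  choose θ' hθ0' hθ' using hv'.exists_hasDerivAt
  have hF Θ φ (hφ : ∀ t, HasDerivAt φ (v t (φ t)) t) (h0 : φ 0 = Θ) : φ = θ Θ :=
    hv.eq_of_hasDerivAt hφ (hθ Θ) (h0.trans (hθ0 Θ).symm)
  have hG Θ φ (hφ : ∀ t, HasDerivAt φ (v (t + x) (φ t)) t) (h0 : φ 0 = Θ) : φ = θ' Θ :=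
    hv'.eq_of_hasDerivAt hφ (hθ' Θ) (h0.trans (hθ0' Θ).symm)
  have hGF Θ : θ' (θ Θ x) (-x) = Θ := by
    have := hG (θ Θ x) _ (fun t => (hθ Θ (t + x)).comp_add_const t x) (by simp)
    simpa [hθ0] using (congrFun this (-x)).symm
  have hFG Θ : θ (θ' Θ (-x)) x = Θ := by
    have := hF (θ' Θ (-x)) _
      (fun t => by simpa using (hθ' Θ (t - x)).comp_sub_const t x) (by simp)
    simpa [hθ0'] using (congrFun this x).symm
  have hFm : StrictMono fun Θ => θ Θ x := fun Θ₁ Θ₂ h =>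
    hv.lt_of_hasDerivAt (hθ Θ₁) (hθ Θ₂) (by rwa [hθ0, hθ0]) x
  have hGm : StrictMono fun Θ => θ' Θ (-x) := fun Θ₁ Θ₂ h =>
    hv'.lt_of_hasDerivAt (hθ' Θ₁) (hθ' Θ₂) (by rwa [hθ0', hθ0']) (-x)
  exact ⟨fun Θ => θ Θ x, fun Θ => θ' Θ (-x), fun Θ φ hφ h0 => congrFun (hF Θ φ hφ h0) x,
    fun Θ φ hφ h0 => congrFun (hG Θ φ hφ h0) (-x), hFm,
    hFm.monotone.continuous_of_surjective fun Θ => ⟨_, hFG Θ⟩,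
    hGm.monotone.continuous_of_surjective fun Θ => ⟨_, hGF Θ⟩, hGF, hFG⟩

/-- for fixed `λ` and `x`, the map `Θ ↦ θ_λ(x, Θ; ṽ)` is a strictly
increasing self-homeomorphism of `ℝ`, with inverse `Θ ↦ θ_λ(-x, Θ; ṽ·x)`. -/
theorem pruefer_homeomorph (a q w : ℝ → ℝ)
    (ha : Continuous a) (hq : Continuous q) (hw : Continuous w)
    (hab : ∃ C : ℝ, ∀ x : ℝ, |a x| ≤ C) (hqb : ∃ C : ℝ, ∀ x : ℝ, |q x| ≤ C)
    (hwb : ∃ C : ℝ, ∀ x : ℝ, |w x| ≤ C)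
    (hapos : ∀ x : ℝ, 0 < a x) (hwpos : ∀ x : ℝ, 0 < w x)
    (lam x : ℝ) :
    ∃ F G : ℝ → ℝ,
      (∀ (Θ : ℝ) (θ : ℝ → ℝ), IsPruefer a q w lam θ → θ 0 = Θ → θ x = F Θ) ∧
      (∀ (Θ : ℝ) (θ : ℝ → ℝ),
        IsPruefer (fun y => a (y + x)) (fun y => q (y + x)) (fun y => w (y + x)) lam θ →
        θ 0 = Θ → θ (-x) = G Θ) ∧
      StrictMono F ∧ Continuous F ∧ Continuous G ∧
      (∀ Θ : ℝ, G (F Θ) = Θ) ∧ (∀ Θ : ℝ, F (G Θ) = Θ) :=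
  pruefer_homeomorph_general a q w ha hq hw lam x
end
end

section
/- Let ṽ = (a, q̃, w̃) be a triple of bounded continuous real functions on ℝ with a and w̃ strictly positive, and let λ ∈ ℝ. If for some solution θ₀ of the Prüfer equation associated with ṽ the limit lim_{x→+∞} (θ₀(x) − θ₀(0))/x exists, then for every solution θ of the same Prüfer equation the limit lim_{x→+∞} (θ(x) − θ(0))/x exists and equals that of θ₀; in other words, existence and the value of the limit are independent of the initial angle. -/
open Filter Topology MeasureTheory Set

noncomputable section

/-!
Solutions of `θ' = v(x, θ)` with `v` Lipschitz in `θ` cannot cross, and when `v` is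
`π`-periodic in `θ` the translates `θ₀ + kπ` are solutions too. Trapping `θ` between
`θ₀ + kπ` and `θ₀ + (k+1)π` shows that `θ - θ₀` stays bounded on `[0, ∞)`, which is
invisible after dividing by `x`.
-/

open Real
open scoped NNReal

theorem lipschitzWith_mul_cos_sq_add_mul_sin_sq (α β : ℝ) :
    LipschitzWith ‖α - β‖₊ (fun y => α * cos y ^ 2 + β * sin y ^ 2) := by
  refine LipschitzWith.of_dist_le_mul fun y z => ?_
  have hdiff : (α * cos y ^ 2 + β * sin y ^ 2) - (α * cos z ^ 2 + β * sin z ^ 2) =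
      (α - β) / 2 * (cos (2 * y) - cos (2 * z)) := by
    rw [sin_sq, sin_sq, cos_sq y, cos_sq z]
    ring
  have hcos : |cos (2 * y) - cos (2 * z)| ≤ 2 * |y - z| := by
    simpa [← mul_sub, abs_mul] using abs_cos_sub_cos_le (2 * y) (2 * z)
  rw [Real.dist_eq, Real.dist_eq, hdiff, coe_nnnorm, norm_eq_abs, abs_mul, abs_div, abs_two]
  calc |α - β| / 2 * |cos (2 * y) - cos (2 * z)| ≤ |α - β| / 2 * (2 * |y - z|) := by gcongr
    _ = |α - β| * |y - z| := by ring

theorem periodic_mul_cos_sq_add_mul_sin_sq (α β : ℝ) :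
    Function.Periodic (fun y => α * cos y ^ 2 + β * sin y ^ 2) π := fun y => by
  simp only [cos_add_pi, sin_add_pi, neg_sq]

theorem ODE_solution_le_of_le {v : ℝ → ℝ → ℝ} {K : ℝ≥0} (hv : ∀ t, LipschitzWith K (v t))
    {f g : ℝ → ℝ} (hf : ∀ t, HasDerivAt f (v t (f t)) t) (hg : ∀ t, HasDerivAt g (v t (g t)) t)
    {t₀ t : ℝ} (h₀ : f t₀ ≤ g t₀) (ht : t₀ ≤ t) : f t ≤ g t := by
  by_contra! hlt
  have hfc : Continuous f := continuous_iff_continuousAt.2 fun s => (hf s).continuousAt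
  have hgc : Continuous g := continuous_iff_continuousAt.2 fun s => (hg s).continuousAt
  -- At a crossing point the solutions agree, so by uniqueness they coincide up to `t`.
  obtain ⟨c, ⟨-, hct⟩, hc⟩ : ∃ c ∈ Icc t₀ t, f c - g c = 0 :=
    intermediate_value_Icc ht (hfc.sub hgc).continuousOn ⟨sub_nonpos.2 h₀, (sub_pos.2 hlt).le⟩
  have heq := ODE_solution_unique_of_mem_Icc_right (s := fun _ => univ)
    (fun s _ => (hv s).lipschitzOnWith) hfc.continuousOn (fun s _ => (hf s).hasDerivWithinAt)
    (fun _ _ => mem_univ _) hgc.continuousOn (fun s _ => (hg s).hasDerivWithinAt)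
    (fun _ _ => mem_univ _) (sub_eq_zero.1 hc) ⟨hct, le_rfl⟩
  exact hlt.ne' heq

theorem ODE_solution_abs_sub_sub_le_of_periodic {v : ℝ → ℝ → ℝ} {K : ℝ≥0} {p : ℝ} (hp : 0 < p)
    (hv : ∀ t, LipschitzWith K (v t)) (hper : ∀ t, Function.Periodic (v t) p)
    {f g : ℝ → ℝ} (hf : ∀ t, HasDerivAt f (v t (f t)) t) (hg : ∀ t, HasDerivAt g (v t (g t)) t)
    {t₀ t : ℝ} (ht : t₀ ≤ t) : |(f t - g t) - (f t₀ - g t₀)| ≤ p := by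
  have hshift (n : ℤ) (s : ℝ) : HasDerivAt (fun s => g s + n * p) (v s (g s + n * p)) s := by
    rw [(hper s).int_mul n]
    exact (hg s).add_const _
  set k := ⌊(f t₀ - g t₀) / p⌋
  have hk₀ : g t₀ + k * p ≤ f t₀ := by
    have := Int.floor_le ((f t₀ - g t₀) / p)
    rw [le_div_iff₀ hp] at this
    linarith
  have hk₁ : f t₀ ≤ g t₀ + (k + 1 : ℤ) * p := by
    have := Int.lt_floor_add_one ((f t₀ - g t₀) / p)
    rw [div_lt_iff₀ hp] at this
    push_cast
    linarith
  have hlo := ODE_solution_le_of_le hv (hshift k) hf hk₀ ht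
  have hhi := ODE_solution_le_of_le hv hf (hshift (k + 1)) hk₁ ht
  push_cast at hk₁ hhi
  rw [abs_le]
  constructor <;> linarith

theorem tendsto_sub_div_of_abs_sub_sub_le {f g : ℝ → ℝ} {C L : ℝ}
    (hC : ∀ᶠ x in atTop, |(f x - g x) - (f 0 - g 0)| ≤ C)
    (hg : Tendsto (fun x => (g x - g 0) / x) atTop (𝓝 L)) :
    Tendsto (fun x => (f x - f 0) / x) atTop (𝓝 L) := by
  have hdiff : Tendsto (fun x => ((f x - g x) - (f 0 - g 0)) / x) atTop (𝓝 0) := by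
    refine squeeze_zero_norm' ?_ ((tendsto_const_nhds (x := C)).div_atTop tendsto_id)
    filter_upwards [hC, eventually_gt_atTop 0] with x hx hx₀
    rw [norm_div, norm_eq_abs, norm_eq_abs, abs_of_pos hx₀]
    exact div_le_div_of_nonneg_right hx hx₀.le
  convert hg.add hdiff using 2 with x
  · ring
  · simp

theorem pruefer_limit_independent_general (a q w : ℝ → ℝ)
    (hab : ∃ C : ℝ, ∀ x : ℝ, |a x| ≤ C) (hqb : ∃ C : ℝ, ∀ x : ℝ, |q x| ≤ C)
    (hwb : ∃ C : ℝ, ∀ x : ℝ, |w x| ≤ C)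
    (lam L : ℝ) (θ₀ : ℝ → ℝ) (h₀ : IsPruefer a q w lam θ₀)
    (hlim : Tendsto (fun x => (θ₀ x - θ₀ 0) / x) atTop (𝓝 L)) :
    ∀ θ : ℝ → ℝ, IsPruefer a q w lam θ →
      Tendsto (fun x => (θ x - θ 0) / x) atTop (𝓝 L) := by
  intro θ hθ
  obtain ⟨Ca, hCa⟩ := hab
  obtain ⟨Cq, hCq⟩ := hqb
  obtain ⟨Cw, hCw⟩ := hwb
  have hK (x : ℝ) : ‖a x - (lam * w x - q x)‖₊ ≤ (Ca + |lam| * Cw + Cq).toNNReal := by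
    have hnorm : ‖a x - (lam * w x - q x)‖ ≤ Ca + |lam| * Cw + Cq := by
      calc ‖a x - (lam * w x - q x)‖ = |a x + -(lam * w x) + q x| := by
            rw [norm_eq_abs]; congr 1; ring
        _ ≤ |a x| + |lam| * |w x| + |q x| := by
            simpa only [abs_neg, abs_mul] using abs_add_three (a x) (-(lam * w x)) (q x)
        _ ≤ Ca + |lam| * Cw + Cq := by gcongr <;> apply_assumption
    rw [← norm_toNNReal]
    exact toNNReal_le_toNNReal hnorm
  have hv (x : ℝ) := (lipschitzWith_mul_cos_sq_add_mul_sin_sq (a x) (lam * w x - q x)).weaken (hK x)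
  refine tendsto_sub_div_of_abs_sub_sub_le (C := π) ?_ hlim
  filter_upwards [eventually_ge_atTop 0] with x hx
  exact ODE_solution_abs_sub_sub_le_of_periodic pi_pos hv
    (fun _ => periodic_mul_cos_sq_add_mul_sin_sq _ _) hθ h₀ hx

/-- existence and value of the rotation limit do not depend on the
initial angle. -/
theorem pruefer_limit_independent (a q w : ℝ → ℝ)
    (ha : Continuous a) (hq : Continuous q) (hw : Continuous w)
    (hab : ∃ C : ℝ, ∀ x : ℝ, |a x| ≤ C) (hqb : ∃ C : ℝ, ∀ x : ℝ, |q x| ≤ C)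
    (hwb : ∃ C : ℝ, ∀ x : ℝ, |w x| ≤ C)
    (hapos : ∀ x : ℝ, 0 < a x) (hwpos : ∀ x : ℝ, 0 < w x)
    (lam L : ℝ) (θ₀ : ℝ → ℝ) (h₀ : IsPruefer a q w lam θ₀)
    (hlim : Tendsto (fun x => (θ₀ x - θ₀ 0) / x) atTop (𝓝 L)) :
    ∀ θ : ℝ → ℝ, IsPruefer a q w lam θ →
      Tendsto (fun x => (θ x - θ 0) / x) atTop (𝓝 L) :=
  pruefer_limit_independent_general a q w hab hqb hwb lam L θ₀ h₀ hlim
end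
end
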